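/- arXiv:1509.04927 — 4 statements merged into one kernel-verified Lean document; each statement's English description precedes it below -/
import Mathlib

section
/- (Berge's theorem.) Let G = (V,E) be a finite undirected graph and M ⊆ E a matching. Then M is a maximum matching (no matching of G has strictly larger cardinality) if and only if there exists no M-augmenting path in G. -/
variable {V : Type*}

/-- `M` is a matching of the simple graph `G`: a set of edges of `G`,
no two of which share a node. -/
def IsMatchingOn (G : SimpleGraph V) (M : Set (Sym2 V)) : Prop :=
  M ⊆ G.edgeSet ∧ ∀ e ∈ M, ∀ f ∈ M, ∀ v : V, v ∈ e → v ∈ f → e = f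

/-- A node is `M`-free if it is incident to no edge of `M`. -/
def MFree (M : Set (Sym2 V)) (v : V) : Prop := ∀ e ∈ M, v ∉ e

/-- The edges of the vertex list alternate between `M` and its complement;
the Boolean `b` records whether the next edge must belong to `M`. -/
def AlternatesFrom (M : Set (Sym2 V)) : Bool → List V → Prop
  | _, [] => True
  | _, [_] => True
  | b, x :: y :: rest => (s(x, y) ∈ M ↔ b = true) ∧ AlternatesFrom M (!b) (y :: rest)

/-- A vertex list is `M`-alternating if its edges belong alternately to `M`
and to the complement of `M`. -/
def IsAlternating (M : Set (Sym2 V)) (p : List V) : Prop :=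
  AlternatesFrom M true p ∨ AlternatesFrom M false p

/-- An `M`-augmenting path in `G`: a simple `M`-alternating path (with at least
one edge) both of whose endpoints are `M`-free. -/
def IsAugmentingPath (G : SimpleGraph V) (M : Set (Sym2 V)) (p : List V) : Prop :=
  2 ≤ p.length ∧ p.Chain' G.Adj ∧ p.Nodup ∧ IsAlternating M p ∧
    (∀ u, p.head? = some u → MFree M u) ∧ (∀ u, p.getLast? = some u → MFree M u)


/-!
If `P` is an `M`-augmenting path, exchanging the `M`-edges and the other edges of `P` gives a
matching with one more edge; here the exchange is made two edges at a time, by induction on `P`.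

Conversely, let `f` and `g` be the involutions sending a vertex to its partner in `M`, resp. in
another matching `M'`. From an `M`-free vertex `a`, follow `a, g a, f (g a), …` until the walk
stays put. If it stops after an odd number of steps it is an `M`-augmenting path; otherwise it
ends at a vertex covered by `M` but not by `M'`. Walks can be retraced from their end, so without
augmenting paths this injects the vertices covered only by `M'` into those covered only by `M`,
whence `2 |M'| ≤ 2 |M|`.
-/

section Matching

variable {G : SimpleGraph V} {M M' : Set (Sym2 V)} {e : Sym2 V} {v : V}

theorem IsMatchingOn.mono (hM : IsMatchingOn G M) (h : M' ⊆ M) : IsMatchingOn G M' :=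
  ⟨h.trans hM.1, fun e he f hf v hve hvf => hM.2 e (h he) f (h hf) v hve hvf⟩

theorem IsMatchingOn.insert (hM : IsMatchingOn G M) (he : e ∈ G.edgeSet)
    (hfree : ∀ v ∈ e, MFree M v) : IsMatchingOn G (insert e M) := by
  refine ⟨Set.insert_subset he hM.1, ?_⟩
  rintro e₁ (rfl | he₁) e₂ (rfl | he₂) v hv₁ hv₂
  · rfl
  · exact absurd hv₂ (hfree v hv₁ e₂ he₂)
  · exact absurd hv₁ (hfree v hv₂ e₁ he₁)
  · exact hM.2 e₁ he₁ e₂ he₂ v hv₁ hv₂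

theorem MFree.anti (hv : MFree M v) (h : M' ⊆ M) : MFree M' v :=
  fun e he => hv e (h he)

theorem MFree.insert (hv : MFree M v) (he : v ∉ e) : MFree (insert e M) v := by
  rintro e' (rfl | he')
  exacts [he, hv e' he']

theorem IsMatchingOn.mfree_sdiff_singleton (hM : IsMatchingOn G M) (he : e ∈ M) (hv : v ∈ e) :
    MFree (M \ {e}) v :=
  fun e' he' hve' => he'.2 (hM.2 e' he'.1 e he v hve' hv)

theorem AlternatesFrom.congr :
    ∀ {p : List V} {b : Bool}, AlternatesFrom M b p →
      (∀ x ∈ p, ∀ y ∈ p, (s(x, y) ∈ M ↔ s(x, y) ∈ M')) → AlternatesFrom M' b p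
  | [], _, _, _ => trivial
  | [_], _, _, _ => trivial
  | x :: y :: _, _, ⟨hxy, hrest⟩, hMM' =>
    ⟨(hMM' x (by simp) y (by simp)).symm.trans hxy,
      hrest.congr fun u hu w hw => hMM' u (.tail _ hu) w (.tail _ hw)⟩

theorem IsAugmentingPath.alternatesFrom_false {a b : V} {p : List V}
    (hp : IsAugmentingPath G M (a :: b :: p)) : AlternatesFrom M false (a :: b :: p) := by
  obtain ⟨-, -, -, halt | halt, hhead, -⟩ := hp
  · exact absurd (halt.1.mpr rfl) (hhead a rfl _ · (Sym2.mem_mk_left a b))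
  · exact halt

theorem IsAugmentingPath.exchange {a b c : V} {p : List V} (hM : IsMatchingOn G M)
    (hp : IsAugmentingPath G M (a :: b :: c :: p)) :
    IsMatchingOn G (insert s(a, b) (M \ {s(b, c)})) ∧
      IsAugmentingPath G (insert s(a, b) (M \ {s(b, c)})) (c :: p) := by
  obtain ⟨-, hbc, halt⟩ := hp.alternatesFrom_false
  obtain ⟨-, hchain, hnodup, -, hhead, hlast⟩ := hp
  have hbcM : s(b, c) ∈ M := hbc.mpr rfl
  obtain ⟨ha, hb, hnodup⟩ : a ∉ c :: p ∧ b ∉ c :: p ∧ (c :: p).Nodup := by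
    simp only [List.nodup_cons, List.mem_cons, not_or] at hnodup ⊢
    tauto
  have hnot : ∀ z ∉ c :: p, ∀ x ∈ c :: p, ∀ y ∈ c :: p, z ∉ s(x, y) :=
    fun z hz x hx y hy h => by obtain rfl | rfl := Sym2.mem_iff.mp h <;> contradiction
  have hout : ∀ u ∈ c :: p, u ∉ s(a, b) :=
    fun u hu h => by obtain rfl | rfl := Sym2.mem_iff.mp h <;> contradiction
  refine ⟨(hM.mono Set.sdiff_subset).insert (List.isChain_cons_cons.mp hchain).1 ?_,
    ?_, (List.isChain_cons_cons.mp hchain).2.tail, hnodup, Or.inr (halt.congr ?_), ?_, ?_⟩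
  · intro u hu
    obtain rfl | rfl := Sym2.mem_iff.mp hu
    exacts [(hhead u rfl).anti Set.sdiff_subset,
      hM.mfree_sdiff_singleton hbcM (Sym2.mem_mk_left u c)]
  · obtain _ | ⟨d, p⟩ := p
    · exact (hlast c rfl _ hbcM (Sym2.mem_mk_right b c)).elim
    · simp
  · intro x hx y hy
    have hxa : s(x, y) ≠ s(a, b) := fun h => hnot a ha x hx y hy (h ▸ Sym2.mem_mk_left a b)
    have hxb : s(x, y) ≠ s(b, c) := fun h => hnot b hb x hx y hy (h ▸ Sym2.mem_mk_left b c)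
    simp [hxa, hxb]
  · rintro _ ⟨⟩
    exact (hM.mfree_sdiff_singleton hbcM (Sym2.mem_mk_right b c)).insert (hout c (by simp))
  · intro u hu
    exact ((hlast u (by simpa using hu)).anti Set.sdiff_subset).insert
      (hout u (List.mem_of_getLast? hu))

theorem IsAugmentingPath.exists_isMatchingOn_ncard_eq_add_one [Finite V] :
    ∀ {M : Set (Sym2 V)} {p : List V}, IsMatchingOn G M → IsAugmentingPath G M p →
      ∃ M', IsMatchingOn G M' ∧ M'.ncard = M.ncard + 1
  | _, [], _, hp | _, [_], _, hp => absurd hp.1 (by simp)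
  | M, [a, b], hM, hp => by
    have hfree : ∀ v ∈ s(a, b), MFree M v := by
      intro v hv
      obtain rfl | rfl := Sym2.mem_iff.mp hv
      exacts [hp.2.2.2.2.1 v rfl, hp.2.2.2.2.2 v rfl]
    refine ⟨insert s(a, b) M, hM.insert (List.isChain_pair.mp hp.2.1) hfree,
      Set.ncard_insert_of_notMem fun h =>
        hfree a (Sym2.mem_mk_left a b) _ h (Sym2.mem_mk_left a b)⟩
  | M, a :: b :: c :: p, hM, hp => by
    obtain ⟨hM₂, hp₂⟩ := hp.exchange hM
    obtain ⟨M', hM', hcard⟩ := hp₂.exists_isMatchingOn_ncard_eq_add_one hM₂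
    obtain ⟨hab, hbc, -⟩ := hp.alternatesFrom_false
    refine ⟨M', hM', hcard.trans ?_⟩
    rw [Set.ncard_insert_of_notMem fun h => Bool.false_ne_true (hab.mp h.1),
      Set.ncard_sdiff_singleton_add_one (hbc.mpr rfl)]

end Matching

open Classical in
noncomputable def partner (M : Set (Sym2 V)) (v : V) : V :=
  if h : ∃ w, s(v, w) ∈ M then h.choose else v

section Partner

variable {G : SimpleGraph V} {M : Set (Sym2 V)} {v w : V}

theorem mem_of_partner_ne (h : partner M v ≠ v) : s(v, partner M v) ∈ M := by
  by_cases hv : ∃ w, s(v, w) ∈ M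
  · rw [partner, dif_pos hv]
    exact hv.choose_spec
  · exact absurd (dif_neg hv) h

theorem IsMatchingOn.partner_eq (hM : IsMatchingOn G M) (h : s(v, w) ∈ M) :
    partner M v = w := by
  have hv : ∃ w, s(v, w) ∈ M := ⟨w, h⟩
  rw [partner, dif_pos hv]
  exact Sym2.congr_right.mp
    (hM.2 _ hv.choose_spec _ h v (Sym2.mem_mk_left _ _) (Sym2.mem_mk_left _ _))

theorem IsMatchingOn.partner_eq_self_iff (hM : IsMatchingOn G M) :
    partner M v = v ↔ MFree M v := by
  refine ⟨fun h e he hve => ?_, fun h => by_contra fun hne =>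
    h _ (mem_of_partner_ne hne) (Sym2.mem_mk_left _ _)⟩
  obtain ⟨w, rfl⟩ := Sym2.mem_iff_exists.mp hve
  exact (G.mem_edgeSet.mp (hM.1 he)).ne (h.symm.trans (hM.partner_eq he))

theorem IsMatchingOn.involutive_partner (hM : IsMatchingOn G M) :
    Function.Involutive (partner M) := by
  intro v
  by_cases h : partner M v = v
  · rw [h, h]
  · exact hM.partner_eq (Sym2.eq_swap ▸ mem_of_partner_ne h)

theorem IsMatchingOn.ncard_setOf_partner_ne [Finite V] (hM : IsMatchingOn G M) :
    {v | partner M v ≠ v}.ncard = 2 * M.ncard := by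
  have hcover : {v | partner M v ≠ v} = ⋃ e ∈ M, {v | v ∈ e} := by
    ext v
    simp [hM.partner_eq_self_iff, MFree]
  have hdisj : M.PairwiseDisjoint fun e => {v | v ∈ e} :=
    fun e he f hf hef => Set.disjoint_left.mpr fun v hve hvf => hef (hM.2 e he f hf v hve hvf)
  have hpair : ∀ e ∈ M, {v | v ∈ e}.ncard = 2 := by
    intro e he
    induction e using Sym2.ind with | _ x y => ?_
    have : {v | v ∈ s(x, y)} = {x, y} := by ext; simp
    rw [this, Set.ncard_pair (G.mem_edgeSet.mp (hM.1 he)).ne]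
  rw [hcover, (Set.toFinite M).ncard_biUnion (fun _ _ => Set.toFinite _) hdisj,
    finsum_mem_congr rfl hpair, ← finsum_one, mul_finsum_mem' _ _ (Set.toFinite M)]
  rfl

end Partner

def altStep (f g : V → V) (n : ℕ) : V → V := if n % 2 = 0 then g else f

/-- The walk `a, g a, f (g a), g (f (g a)), …`. -/
def altWalk (f g : V → V) (a : V) : ℕ → V
  | 0 => a
  | n + 1 => altStep f g n (altWalk f g a n)

open Classical in
/-- Junk value `0` when the walk never stays put. -/
noncomputable def stallTime (f g : V → V) (a : V) : ℕ :=
  if h : ∃ n, altWalk f g a (n + 1) = altWalk f g a n then Nat.find h else 0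

section AltWalk

open Function

variable {f g : V → V} {a b : V} {i j n : ℕ}

theorem altStep_of_even (hn : n % 2 = 0) : altStep f g n = g := if_pos hn

theorem altStep_of_odd (hn : n % 2 = 1) : altStep f g n = f := if_neg (by omega)

theorem altStep_congr (h : i % 2 = j % 2) : altStep f g i = altStep f g j := by
  simp only [altStep, h]

theorem altWalk_succ : altWalk f g a (n + 1) = altStep f g n (altWalk f g a n) := rfl

theorem involutive_altStep (hf : Involutive f) (hg : Involutive g) (n : ℕ) :
    Involutive (altStep f g n) := by
  unfold altStep
  split_ifs
  exacts [hg, hf]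

theorem altStep_altWalk_succ (hf : Involutive f) (hg : Involutive g) :
    altStep f g n (altWalk f g a (n + 1)) = altWalk f g a n :=
  involutive_altStep hf hg n _

theorem altWalk_eq_of_succ_eq (hf : Involutive f) (hg : Involutive g) (hij : i % 2 = j % 2)
    (h : altWalk f g a (i + 1) = altWalk f g b (j + 1)) : altWalk f g a i = altWalk f g b j := by
  rw [← altStep_altWalk_succ hf hg, h, altStep_congr hij, altStep_altWalk_succ hf hg]

theorem altWalk_succ_eq_of_eq_succ (hf : Involutive f) (hg : Involutive g) (hij : i % 2 = j % 2)
    (h : altWalk f g a i = altWalk f g b (j + 1)) : altWalk f g a (i + 1) = altWalk f g b j := by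
  rw [altWalk_succ, h, altStep_congr hij, altStep_altWalk_succ hf hg]

theorem altWalk_eq_of_add_eq (hf : Involutive f) (hg : Involutive g) (hij : i % 2 = j % 2) :
    ∀ {m}, altWalk f g a (i + m) = altWalk f g b (j + m) → altWalk f g a i = altWalk f g b j
  | 0, h => h
  | m + 1, h => altWalk_eq_of_add_eq hf hg hij (altWalk_eq_of_succ_eq hf hg (by omega) h)

/-- A repetition `w i = w j` reflects to the shorter repetition `w (i + 1) = w (j - 1)` or
`w (i - 1) = w (j - 1)` (for `i = 0` through `f a = a`), until it becomes a step that stays put. -/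
theorem altWalk_ne_of_lt (hf : Involutive f) (hg : Involutive g) (ha : f a = a)
    (hmove : ∀ m < j, altWalk f g a (m + 1) ≠ altWalk f g a m) (hij : i < j) :
    altWalk f g a i ≠ altWalk f g a j := by
  induction j using Nat.strong_induction_on generalizing i with | _ j ih => ?_
  obtain ⟨j, rfl⟩ : ∃ j', j = j' + 1 := ⟨j - 1, by omega⟩
  intro h
  have hmove' : ∀ m < j, altWalk f g a (m + 1) ≠ altWalk f g a m :=
    fun m hm => hmove m (by omega)
  by_cases hpar : i % 2 = j % 2
  · have h' := altWalk_succ_eq_of_eq_succ hf hg hpar h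
    obtain rfl | hij' : i = j ∨ i + 1 < j := by omega
    · exact hmove i (by omega) h'
    · exact ih j (by omega) hmove' hij' h'
  · obtain _ | i := i
    · refine ih j (by omega) hmove' (by omega : 0 < j) ?_
      rw [← altStep_altWalk_succ hf hg (n := j), ← h, altStep_of_odd (by omega)]
      exact ha.symm
    · exact ih j (by omega) hmove' (by omega) (altWalk_eq_of_succ_eq hf hg (by omega) h)

theorem injOn_altWalk (hf : Involutive f) (hg : Involutive g) (ha : f a = a)
    (hmove : ∀ m < j, altWalk f g a (m + 1) ≠ altWalk f g a m) :
    Set.InjOn (altWalk f g a) (Set.Iic j) := by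
  intro i hi k hk h
  by_contra hne
  obtain hlt | hlt := Ne.lt_or_gt hne
  · exact altWalk_ne_of_lt hf hg ha (fun m hm => hmove m (lt_of_lt_of_le hm hk)) hlt h
  · exact altWalk_ne_of_lt hf hg ha (fun m hm => hmove m (lt_of_lt_of_le hm hi)) hlt h.symm

theorem apply_altWalk_ne_of_even (hf : Involutive f) (hg : Involutive g) (ha : f a = a)
    (hmove : ∀ m < j, altWalk f g a (m + 1) ≠ altWalk f g a m) (hn : n < j)
    (heven : n % 2 = 0) : f (altWalk f g a n) ≠ altWalk f g a (n + 1) := by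
  obtain _ | n := n
  · exact fun h => hmove 0 hn (h.symm.trans ha)
  · have hback := altStep_altWalk_succ hf hg (a := a) (n := n)
    rw [altStep_of_odd (by omega)] at hback
    rw [hback]
    exact altWalk_ne_of_lt hf hg ha (fun m hm => hmove m (by omega)) (by omega)

theorem exists_altWalk_succ_eq [Finite V] (hf : Involutive f) (hg : Involutive g)
    (ha : f a = a) : ∃ n, altWalk f g a (n + 1) = altWalk f g a n := by
  by_contra! hmove
  exact not_injective_infinite_finite (altWalk f g a) fun i k h =>
    injOn_altWalk hf hg ha (j := max i k) (fun m _ => hmove m) (le_max_left i k)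
      (le_max_right i k) h

theorem altWalk_stallTime_succ [Finite V] (hf : Involutive f) (hg : Involutive g)
    (ha : f a = a) : altWalk f g a (stallTime f g a + 1) = altWalk f g a (stallTime f g a) := by
  classical
  have h := exists_altWalk_succ_eq hf hg ha
  rw [stallTime, dif_pos h]
  exact Nat.find_spec h

theorem altWalk_succ_ne_of_lt_stallTime (hn : n < stallTime f g a) :
    altWalk f g a (n + 1) ≠ altWalk f g a n := by
  classical
  rw [stallTime] at hn
  split_ifs at hn with h
  · exact Nat.find_min h hn
  · omega

theorem altWalk_stallTime_mem_sdiff [Finite V] (hf : Involutive f) (hg : Involutive g)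
    (ha : f a = a) (hga : g a ≠ a) (heven : stallTime f g a % 2 = 0) :
    altWalk f g a (stallTime f g a) ∈ {v | f v ≠ v} \ {v | g v ≠ v} := by
  have hstall := altWalk_stallTime_succ hf hg (g := g) ha
  rw [altWalk_succ, altStep_of_even heven] at hstall
  obtain ⟨n, hn⟩ : ∃ n, stallTime f g a = n + 1 :=
    Nat.exists_eq_succ_of_ne_zero fun h0 => hga (by rwa [h0] at hstall)
  refine ⟨fun hfix => altWalk_succ_ne_of_lt_stallTime (f := f) (g := g) (a := a) (n := n)
    (by omega) ?_, fun h => h hstall⟩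
  rw [hn] at hfix
  rw [← altStep_altWalk_succ hf hg (n := n), altStep_of_odd (by omega), hfix]

theorem eq_of_altWalk_eq_altWalk_stallTime (hf : Involutive f) (hg : Involutive g)
    (ha : f a = a) (hpar : i % 2 = stallTime f g b % 2) (hle : i ≤ stallTime f g b)
    (h : altWalk f g a i = altWalk f g b (stallTime f g b)) : a = b := by
  obtain ⟨d, hd⟩ := Nat.exists_eq_add_of_le' hle
  rw [hd] at h hpar
  have had : a = altWalk f g b d :=
    altWalk_eq_of_add_eq hf hg (i := 0) (by omega) (by simpa using h)
  obtain _ | d := d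
  · exact had
  · refine absurd ?_ (altWalk_succ_ne_of_lt_stallTime (f := f) (g := g) (a := b) (n := d)
      (by omega))
    rw [← had, ← altStep_altWalk_succ hf hg (n := d), ← had, altStep_of_odd (by omega), ha]

theorem injOn_altWalk_stallTime (hf : Involutive f) (hg : Involutive g) :
    Set.InjOn (fun a => altWalk f g a (stallTime f g a))
      {a | f a = a ∧ stallTime f g a % 2 = 0} := by
  rintro a ⟨ha, ha'⟩ b ⟨hb, hb'⟩ h
  obtain hab | hab := le_total (stallTime f g a) (stallTime f g b)
  · exact eq_of_altWalk_eq_altWalk_stallTime hf hg ha (by omega) hab h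
  · exact (eq_of_altWalk_eq_altWalk_stallTime hf hg hb (by omega) hab h.symm).symm

/-- Sending each walk to its end injects the points moved by `g` but not by `f` into the points
moved by `f` but not by `g`. -/
theorem ncard_setOf_ne_le_of_stallTime_even [Finite V] (hf : Involutive f) (hg : Involutive g)
    (heven : ∀ a, f a = a → stallTime f g a % 2 = 0) :
    {v | g v ≠ v}.ncard ≤ {v | f v ≠ v}.ncard := by
  rw [Set.ncard_le_ncard_iff_ncard_sdiff_le_ncard_sdiff]
  have hfix : ∀ {a}, a ∈ {v | g v ≠ v} \ {v | f v ≠ v} → f a = a ∧ g a ≠ a :=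
    fun ha => ⟨not_not.mp ha.2, ha.1⟩
  refine Set.ncard_le_ncard_of_injOn (fun a => altWalk f g a (stallTime f g a))
    (fun a ha => ?_) (fun a ha b hb => ?_)
  · exact altWalk_stallTime_mem_sdiff hf hg (hfix ha).1 (hfix ha).2 (heven a (hfix ha).1)
  · exact injOn_altWalk_stallTime hf hg ⟨(hfix ha).1, heven a (hfix ha).1⟩
      ⟨(hfix hb).1, heven b (hfix hb).1⟩

end AltWalk

section AugmentingPath

variable {G : SimpleGraph V} {M M' : Set (Sym2 V)}

theorem alternatesFrom_map_range : ∀ {n : ℕ} {w : ℕ → V} {b : Bool},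
    (∀ m < n, (s(w m, w (m + 1)) ∈ M ↔ (m % 2 = 0 ↔ b = true))) →
      AlternatesFrom M b ((List.range (n + 1)).map w)
  | 0, _, _, _ => trivial
  | n + 1, w, b, h => by
    have ih : AlternatesFrom M (!b) ((List.range (n + 1)).map (w ∘ Nat.succ)) :=
      alternatesFrom_map_range fun m hm => by
        rw [Function.comp_apply, Function.comp_apply, h (m + 1) (by omega)]
        cases b <;> simp <;> omega
    rw [List.range_succ_eq_map, List.map_cons, List.map_map]
    rw [List.range_succ_eq_map, List.map_cons, List.map_map] at ih ⊢
    exact ⟨by simpa using h 0 (by omega), ih⟩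

theorem isAugmentingPath_map_range {w : ℕ → V} {n : ℕ} (hn : 0 < n)
    (hadj : ∀ m < n, G.Adj (w m) (w (m + 1))) (hinj : Set.InjOn w (Set.Iic n))
    (halt : ∀ m < n, (s(w m, w (m + 1)) ∈ M ↔ m % 2 = 1))
    (hfirst : MFree M (w 0)) (hlast : MFree M (w n)) :
    IsAugmentingPath G M ((List.range (n + 1)).map w) := by
  refine ⟨by simp; omega, List.isChain_map _ |>.mpr ((List.isChain_range_succ _ _).mpr hadj),
    List.nodup_range.map_on fun i hi j hj => hinj ?_ ?_,
    Or.inr (alternatesFrom_map_range fun m hm => (halt m hm).trans (by simp)), ?_, ?_⟩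
  · simpa [Nat.lt_succ_iff] using hi
  · simpa [Nat.lt_succ_iff] using hj
  · intro u hu
    rw [List.head?_map, List.head?_range, if_neg (by omega)] at hu
    cases hu
    exact hfirst
  · intro u hu
    rw [List.getLast?_map, List.getLast?_range, if_neg (by omega)] at hu
    cases hu
    exact hlast

theorem IsMatchingOn.altWalk_partner_edge {a : V} {m : ℕ} (hM : IsMatchingOn G M)
    (hM' : IsMatchingOn G M') (ha : MFree M a) (hm : m < stallTime (partner M) (partner M') a) :
    G.Adj (altWalk (partner M) (partner M') a m) (altWalk (partner M) (partner M') a (m + 1)) ∧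
      (s(altWalk (partner M) (partner M') a m, altWalk (partner M) (partner M') a (m + 1)) ∈ M ↔
        m % 2 = 1) := by
  set f := partner M
  set g := partner M'
  have hmove : ∀ k < stallTime f g a, altWalk f g a (k + 1) ≠ altWalk f g a k :=
    fun k hk => altWalk_succ_ne_of_lt_stallTime hk
  have hstep := hmove m hm
  obtain hpar | hpar := Nat.mod_two_eq_zero_or_one m
  · rw [altWalk_succ, altStep_of_even hpar] at hstep ⊢
    refine ⟨hM'.1 (mem_of_partner_ne hstep), iff_of_false (fun hmem => ?_) (by omega)⟩
    refine apply_altWalk_ne_of_even hM.involutive_partner hM'.involutive_partner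
      (hM.partner_eq_self_iff.mpr ha) hmove hm hpar ?_
    rw [altWalk_succ, altStep_of_even hpar]
    exact hM.partner_eq hmem
  · rw [altWalk_succ, altStep_of_odd hpar] at hstep ⊢
    exact ⟨hM.1 (mem_of_partner_ne hstep), iff_of_true (mem_of_partner_ne hstep) hpar⟩

theorem IsMatchingOn.isAugmentingPath_altWalk_partner [Finite V] {a : V}
    (hM : IsMatchingOn G M) (hM' : IsMatchingOn G M') (ha : MFree M a)
    (hodd : stallTime (partner M) (partner M') a % 2 = 1) :
    IsAugmentingPath G M ((List.range (stallTime (partner M) (partner M') a + 1)).map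
      (altWalk (partner M) (partner M') a)) := by
  have hfa : partner M a = a := hM.partner_eq_self_iff.mpr ha
  have hstall := altWalk_stallTime_succ hM.involutive_partner hM'.involutive_partner
    (g := partner M') hfa
  rw [altWalk_succ, altStep_of_odd hodd] at hstall
  exact isAugmentingPath_map_range (by omega)
    (fun m hm => (hM.altWalk_partner_edge hM' ha hm).1)
    (injOn_altWalk hM.involutive_partner hM'.involutive_partner hfa
      fun m hm => altWalk_succ_ne_of_lt_stallTime hm)
    (fun m hm => (hM.altWalk_partner_edge hM' ha hm).2) ha (hM.partner_eq_self_iff.mp hstall)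

theorem IsMatchingOn.ncard_le_of_not_exists_isAugmentingPath [Finite V]
    (hM : IsMatchingOn G M) (hM' : IsMatchingOn G M') (h : ¬∃ p, IsAugmentingPath G M p) :
    M'.ncard ≤ M.ncard := by
  have hle := ncard_setOf_ne_le_of_stallTime_even hM.involutive_partner hM'.involutive_partner
    fun a ha => by
      by_contra hodd
      exact h ⟨_, hM.isAugmentingPath_altWalk_partner hM' (hM.partner_eq_self_iff.mp ha)
        (by omega)⟩
  rw [hM.ncard_setOf_partner_ne, hM'.ncard_setOf_partner_ne] at hle
  omega

end AugmentingPath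

/-- Berge's theorem: a matching `M` of a finite graph `G` is maximum
(no matching has strictly larger cardinality) iff there is no
`M`-augmenting path in `G`. -/
theorem berge [Fintype V] (G : SimpleGraph V) (M : Set (Sym2 V))
    (hM : IsMatchingOn G M) :
    (∀ M' : Set (Sym2 V), IsMatchingOn G M' → M'.ncard ≤ M.ncard) ↔
      ¬∃ p : List V, IsAugmentingPath G M p := by
  refine ⟨fun hmax ⟨p, hp⟩ => ?_,
    fun h M' hM' => hM.ncard_le_of_not_exists_isAugmentingPath hM' h⟩
  obtain ⟨M', hM', hcard⟩ := hp.exists_isMatchingOn_ncard_eq_add_one hM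
  have := hmax M' hM'
  omega
end

section
/- Let G = (V,E) be a finite undirected graph, M ⊆ E a matching, and G_M = (V',E_M) the associated directed bipartite graph. Then there exists an M-augmenting path in G if and only if there exists a strongly simple path from s to t in G_M. -/
variable {V : Type*}

/-- The two labels `A` and `B`. -/
inductive Lbl where
  | A : Lbl
  | B : Lbl

/-- Nodes of the directed graph `G_M`: the nodes `[v,A]`, `[v,B]` for `v ∈ V`
together with two new nodes `s` and `t`. -/
inductive GMNode (V : Type*) where
  | inner : V → Lbl → GMNode V
  | s : GMNode V
  | t : GMNode V

/-- The directed adjacency of `G_M`: the edges `([v,A],[w,B])` and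
`([w,A],[v,B])` for `(v,w) ∈ M`; the edges `([x,B],[y,A])` and `([y,B],[x,A])`
for `(x,y) ∈ E ∖ M`; and the edges `(s,[v,B])` and `([v,A],t)` for every
`M`-free node `v`. -/
def gmAdj (G : SimpleGraph V) (M : Set (Sym2 V)) : GMNode V → GMNode V → Prop
  | .inner v .A, .inner w .B => s(v, w) ∈ M
  | .inner x .B, .inner y .A => s(x, y) ∈ G.edgeSet \ M
  | .s, .inner v .B => MFree M v
  | .inner v .A, .t => MFree M v
  | _, _ => False

/-- `p` is a directed path from `u` to `v` with respect to the relation `R`. -/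
def IsDirPath {α : Type*} (R : α → α → Prop) (p : List α) (u v : α) : Prop :=
  p.Chain' R ∧ p.head? = some u ∧ p.getLast? = some v

/-- A list of nodes of `G_M` is strongly simple if it has no repeated node and
contains, for each `v ∈ V`, at most one of the two nodes `[v,A]`, `[v,B]`. -/
def StronglySimple (p : List (GMNode V)) : Prop :=
  p.Nodup ∧ ∀ v : V, ¬(GMNode.inner v .A ∈ p ∧ GMNode.inner v .B ∈ p)

/-!
Arcs of `G_M` leave `[x, A]` along matching edges and `[x, B]` along non-matching ones, so a vertex
list `v₀ v₁ … v_k` lifts to `s, [v₀,B], [v₁,A], [v₂,B], …, t`, and this is a path of `G_M` exactly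
when the list is an alternating path of `G` whose first and last edges avoid `M` and whose endpoints
are free. Every `s`–`t` path of `G_M` is such a lift, since `s` only enters `B`-nodes, `t` is only
entered from `A`-nodes, and inner arcs switch the label. Finally a lift is strongly simple iff the
vertex list has no repetition.
-/

def gmLift : Bool → List V → List (GMNode V)
  | _, [] => []
  | b, x :: r => .inner x (bif b then .A else .B) :: gmLift (!b) r

section
variable {G : SimpleGraph V} {M : Set (Sym2 V)}

lemma exists_inner_mem_gmLift_iff {x : V} {b : Bool} {p : List V} :
    (∃ l, GMNode.inner x l ∈ gmLift b p) ↔ x ∈ p := by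
  induction p generalizing b with
  | nil => simp [gmLift]
  | cons y r ih => simp [gmLift, exists_or, ih]

lemma stronglySimple_inner_cons_iff {x : V} {l : Lbl} {L : List (GMNode V)} :
    StronglySimple (.inner x l :: L) ↔ (∀ l', .inner x l' ∉ L) ∧ StronglySimple L := by
  unfold StronglySimple
  constructor
  · rintro ⟨hnd, hAB⟩
    refine ⟨fun l' hl' => ?_, (List.nodup_cons.1 hnd).2, fun v hv =>
      hAB v ⟨List.mem_cons_of_mem _ hv.1, List.mem_cons_of_mem _ hv.2⟩⟩
    cases l <;> cases l'
    all_goals first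
      | exact (List.nodup_cons.1 hnd).1 hl'
      | exact hAB x ⟨by simp [hl'], by simp [hl']⟩
  · rintro ⟨hx, hnd, hAB⟩
    refine ⟨List.nodup_cons.2 ⟨hx l, hnd⟩, fun v ⟨hA, hB⟩ => ?_⟩
    simp only [List.mem_cons, GMNode.inner.injEq] at hA hB
    rcases hA with ⟨rfl, rfl⟩ | hA <;> rcases hB with ⟨hv, hB⟩ | hB
    · exact Lbl.noConfusion hB
    · exact hx _ hB
    · exact hx _ (hv ▸ hA)
    · exact hAB v ⟨hA, hB⟩

lemma stronglySimple_gmLift_iff {b : Bool} {p : List V} :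
    StronglySimple (gmLift b p) ↔ p.Nodup := by
  induction p generalizing b with
  | nil => simp [gmLift, StronglySimple]
  | cons x r ih =>
    rw [gmLift, stronglySimple_inner_cons_iff, ih, List.nodup_cons,
      ← exists_inner_mem_gmLift_iff (b := !b), not_exists]

lemma isChain_gmLift_append_t_iff (hME : M ⊆ G.edgeSet) {b : Bool} {p : List V} (hp : p ≠ []) :
    (gmLift b p ++ [GMNode.t]).IsChain (gmAdj G M) ↔
      p.IsChain G.Adj ∧ AlternatesFrom M b p ∧ (∀ u, p.getLast? = some u → MFree M u) ∧
        (b = false → 2 ≤ p.length) := by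
  -- `t` is entered only from `A`-nodes, so a lift starting at a `B`-node needs a second vertex.
  induction p generalizing b with
  | nil => contradiction
  | cons x r ih =>
    cases r with
    | nil => cases b <;> simp [gmLift, gmAdj, AlternatesFrom]
    | cons y r =>
      have hlift : gmLift b (x :: y :: r) ++ [GMNode.t] =
          .inner x (bif b then .A else .B) :: (gmLift (!b) (y :: r) ++ [GMNode.t]) := rfl
      rw [hlift, List.isChain_cons, ih (List.cons_ne_nil y r), List.isChain_cons_cons,
        AlternatesFrom, List.getLast?_cons_cons]
      have hadj : s(x, y) ∈ M → G.Adj x y := fun h => hME h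
      have hnonempty : s(x, y) ∈ M → (∀ u, (y :: r).getLast? = some u → MFree M u) → r ≠ [] := by
        rintro hxy hfree rfl
        exact hfree y rfl _ hxy (Sym2.mem_mk_right x y)
      cases b <;> simp [gmLift, gmAdj, ← List.length_pos_iff] at hnonempty ⊢ <;> tauto

lemma exists_gmLift_of_isChain {b : Bool} {v : V} {L : List (GMNode V)}
    (hL : (.inner v (bif b then .A else .B) :: L).IsChain (gmAdj G M))
    (hlast : (.inner v (bif b then .A else .B) :: L).getLast? = some .t) :
    ∃ p, .inner v (bif b then .A else .B) :: L = gmLift b (v :: p) ++ [GMNode.t] := by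
  induction L generalizing b v with
  | nil => simp at hlast
  | cons n L ih =>
    rw [List.isChain_cons_cons] at hL
    obtain ⟨hvn, hL⟩ := hL
    rw [List.getLast?_cons_cons] at hlast
    cases n with
    | s => cases b <;> exact (hvn : False).elim
    | t =>
      cases L with
      | nil => exact ⟨[], rfl⟩
      | cons m L => cases m <;> exact (List.isChain_cons_cons.1 hL).1.elim
    | inner y l =>
      obtain rfl : l = bif !b then .A else .B := by
        cases b <;> cases l <;> first | rfl | exact (hvn : False).elim
      obtain ⟨p, hp⟩ := ih hL hlast
      exact ⟨y :: p, congrArg (List.cons _) hp⟩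

lemma exists_gmLift_of_isDirPath {L : List (GMNode V)} (hL : IsDirPath (gmAdj G M) L .s .t) :
    ∃ p, L = .s :: (gmLift false p ++ [GMNode.t]) := by
  obtain ⟨hchain, hhead, hlast⟩ := hL
  rcases L with _ | ⟨a, _ | ⟨n, L⟩⟩
  · simp at hhead
  · simp only [List.head?_cons, List.getLast?_singleton, Option.some.injEq] at hhead hlast
    cases hhead.symm.trans hlast
  · obtain rfl : a = .s := by simpa using hhead
    obtain ⟨hsn, hchain⟩ := List.isChain_cons_cons.1 hchain
    rw [List.getLast?_cons_cons] at hlast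
    cases n with
    | inner v l =>
      cases l
      · exact (hsn : False).elim
      · obtain ⟨p, hp⟩ := exists_gmLift_of_isChain (b := false) hchain hlast
        exact ⟨v :: p, congrArg (List.cons _) hp⟩
    | s | t => exact (hsn : False).elim

lemma notMem_gmLift {n : GMNode V} (hn : ∀ v l, n ≠ .inner v l) {b : Bool} {p : List V} :
    n ∉ gmLift b p := by
  induction p generalizing b with
  | nil => simp [gmLift]
  | cons x r ih => simp [gmLift, hn, ih]

lemma stronglySimple_s_cons_append_t_iff {L : List (GMNode V)} (hs : .s ∉ L) (ht : .t ∉ L) :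
    StronglySimple (.s :: (L ++ [GMNode.t])) ↔ StronglySimple L := by
  simpa [StronglySimple, List.nodup_cons, List.nodup_append, hs] using
    fun _ _ a (ha : a ∈ L) => ne_of_mem_of_not_mem ha ht

lemma alternatesFrom_false_of_isAlternating {p : List V} (h : IsAlternating M p)
    (hfree : ∀ u, p.head? = some u → MFree M u) : AlternatesFrom M false p := by
  match p, h with
  | x :: y :: r, .inl h => exact absurd (Sym2.mem_mk_left x y) (hfree x rfl _ (h.1.2 rfl))
  | _, .inr h => exact h
  | [], _ | [_], _ => trivial

lemma isAugmentingPath_iff (hME : M ⊆ G.edgeSet) {p : List V} :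
    IsAugmentingPath G M p ↔
      IsDirPath (gmAdj G M) (.s :: (gmLift false p ++ [GMNode.t])) .s .t ∧
        StronglySimple (.s :: (gmLift false p ++ [GMNode.t])) := by
  rw [stronglySimple_s_cons_append_t_iff (notMem_gmLift nofun) (notMem_gmLift nofun),
    stronglySimple_gmLift_iff]
  cases p with
  | nil => exact ⟨fun h => absurd h.1 (by simp), fun h => (List.isChain_pair.1 h.1.1).elim⟩
  | cons v r =>
    have hlift := isChain_gmLift_append_t_iff hME (b := false) (List.cons_ne_nil v r)
    constructor
    · rintro ⟨hlen, hG, hnd, halt, hhead, hlast⟩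
      refine ⟨⟨List.isChain_cons.2 ⟨?_, hlift.2 ⟨hG, ?_, hlast, fun _ => hlen⟩⟩, rfl,
        by rw [← List.cons_append, List.getLast?_concat]⟩, hnd⟩
      · simp only [gmLift, List.cons_append, List.head?_cons, Option.mem_def, Option.some.injEq,
          forall_eq']
        exact hhead v rfl
      · exact alternatesFrom_false_of_isAlternating halt hhead
    · rintro ⟨⟨hchain, -, -⟩, hnd⟩
      obtain ⟨hs, hchain⟩ := List.isChain_cons.1 hchain
      obtain ⟨hG, halt, hlast, hlen⟩ := hlift.1 hchain
      refine ⟨hlen rfl, hG, hnd, .inr halt, ?_, hlast⟩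
      simpa [gmLift, gmAdj] using hs

end

/-- There exists an `M`-augmenting path in `G` iff there exists a strongly
simple path from `s` to `t` in `G_M`. -/
theorem augmenting_iff_stronglySimple_path (G : SimpleGraph V) (M : Set (Sym2 V))
    (hM : IsMatchingOn G M) :
    (∃ p : List V, IsAugmentingPath G M p) ↔
      ∃ p : List (GMNode V), IsDirPath (gmAdj G M) p .s .t ∧ StronglySimple p := by
  constructor
  · rintro ⟨p, hp⟩
    exact ⟨_, (isAugmentingPath_iff hM.1).1 hp⟩
  · rintro ⟨L, hL, hss⟩
    obtain ⟨p, rfl⟩ := exists_gmLift_of_isDirPath hL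
    exact ⟨p, (isAugmentingPath_iff hM.1).2 ⟨hL, hss⟩⟩
end

section
/- Let P = s, [v_1,B], [v_2,A], …, [v_l,Z] be a shortest strongly simple path in G_M from s to [v_l,Z], so that level([v_l,Z]) = l. Let [v_j,X] be the j-th node of P (counting from s, so [v_j,X] appears at distance j along P), and suppose level([v_j,X̄]) ≥ l (or level([v_j,X̄]) is undefined). Then level([v_j,X]) = j, and level([v_i,Y]) < level([v_j,X]) for every node [v_i,Y] of P with i < j. -/
variable {V : Type*}

/-- The opposite label: `Ā = B` and `B̄ = A`. -/
def Lbl.flip : Lbl → Lbl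
  | .A => .B
  | .B => .A

/-- The level of a node of `G_M`: the length of a shortest strongly simple path
from `s` to it (`⊤` if there is no such path, i.e. the level is undefined). -/
noncomputable def gmLevel (G : SimpleGraph V) (M : Set (Sym2 V)) (x : GMNode V) : ℕ∞ :=
  sInf ((fun p : List (GMNode V) => ((p.length - 1 : ℕ) : ℕ∞)) ''
    {p : List (GMNode V) | IsDirPath (gmAdj G M) p GMNode.s x ∧ StronglySimple p})

/-!
The map `[v,X] ↦ [v,X̄]`, `s ↦ t`, `t ↦ s` reverses every edge of `G_M`. Prefixes of `P` give
`level([v_i,Y]) ≤ i`. Suppose a strongly simple path `q` reaches `[v_j,X]` in fewer than `j` steps,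
and cut `q` at its first node `y` lying over the same vertex as some node `z` of `P` from position
`j` on (there is one: `[v_j,X]` itself). If `y = z`, then `q` up to `y` followed by `P` after `z`
is a strongly simple path to `[v_l,Z]` shorter than `P`. If `y = z̄`, then `q` up to `y` followed by
the mirror image of `P` from `z` back to `[v_j,X]` is a strongly simple path to `[v_j,X̄]` of length
less than `l`. Either way a hypothesis is contradicted.
-/

theorem List.exists_first_mem_of_exists {α : Type*} {P : α → Prop} :
    ∀ {l : List α}, (∃ a ∈ l, P a) → ∃ l₁ a l₂, l = l₁ ++ a :: l₂ ∧ P a ∧ ∀ b ∈ l₁, ¬ P b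
  | [], ⟨_, ha, _⟩ => absurd ha List.not_mem_nil
  | x :: l, ⟨a, ha, hPa⟩ => by
    by_cases hx : P x
    · exact ⟨[], x, l, rfl, hx, by simp⟩
    · obtain ⟨l₁, b, l₂, rfl, hb, hfirst⟩ := List.exists_first_mem_of_exists
        ⟨a, (List.mem_cons.1 ha).resolve_left fun hax => hx (hax ▸ hPa), hPa⟩
      exact ⟨x :: l₁, b, l₂, rfl, hb, List.forall_mem_cons.2 ⟨hx, hfirst⟩⟩

theorem List.drop_eq_cons_of_getElem? {α : Type*} {l : List α} {i : ℕ} {x : α}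
    (h : l[i]? = some x) : l.drop i = x :: l.drop (i + 1) := by
  obtain ⟨hi, rfl⟩ := List.getElem?_eq_some_iff.1 h
  exact List.drop_eq_getElem_cons hi

section IsDirPath

variable {α : Type*} {R : α → α → Prop}

theorem isDirPath_iff {p : List α} {u v : α} :
    IsDirPath R p u v ↔ p.IsChain R ∧ p.head? = some u ∧ p.getLast? = some v :=
  Iff.rfl

theorem isDirPath_append_cons {l r : List α} {u v y : α} :
    IsDirPath R (l ++ y :: r) u v ↔ IsDirPath R (l ++ [y]) u y ∧ IsDirPath R (y :: r) y v := by
  have hchain : (l ++ y :: r).IsChain R ↔ (l ++ [y]).IsChain R ∧ (y :: r).IsChain R := by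
    rw [show l ++ y :: r = (l ++ [y]) ++ r by simp, List.isChain_append, List.isChain_cons]
    simp only [List.getLast?_append, List.getLast?_singleton, Option.some_or, Option.mem_def,
      Option.some.injEq, forall_eq']
    tauto
  simp only [isDirPath_iff, hchain, List.head?_append, List.getLast?_append, List.getLast?_cons,
    List.head?_cons, Option.or_some]
  tauto

theorem IsDirPath.take_of_getElem? {p : List α} {u v x : α} {i : ℕ}
    (hp : IsDirPath R p u v) (hi : p[i]? = some x) : IsDirPath R (p.take (i + 1)) u x := by
  rw [← List.take_append_drop i p, List.drop_eq_cons_of_getElem? hi] at hp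
  rw [List.take_add_one, hi]
  exact (isDirPath_append_cons.1 hp).1

theorem IsDirPath.drop_of_getElem? {p : List α} {u v x : α} {i : ℕ}
    (hp : IsDirPath R p u v) (hi : p[i]? = some x) : IsDirPath R (p.drop i) x v := by
  rw [← List.take_append_drop i p, List.drop_eq_cons_of_getElem? hi] at hp
  rw [List.drop_eq_cons_of_getElem? hi]
  exact (isDirPath_append_cons.1 hp).2

end IsDirPath

namespace GMNode

def flip : GMNode V → GMNode V
  | inner v L => inner v L.flip
  | s => t
  | t => s

@[simp]
theorem flip_flip (x : GMNode V) : x.flip.flip = x := by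
  cases x with
  | inner v L => cases L <;> rfl
  | _ => rfl

/-- `s` and `t` count as lying over one extra vertex. -/
def SameVertex (x y : GMNode V) : Prop := x = y ∨ x = y.flip

theorem sameVertex_comm {x y : GMNode V} : x.SameVertex y ↔ y.SameVertex x := by
  unfold SameVertex; grind [flip_flip]

@[simp]
theorem sameVertex_flip_right {x y : GMNode V} : x.SameVertex y.flip ↔ x.SameVertex y := by
  unfold SameVertex; grind [flip_flip]

@[simp]
theorem sameVertex_flip_flip {x y : GMNode V} : x.flip.SameVertex y.flip ↔ x.SameVertex y := by
  unfold SameVertex; grind [flip_flip]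

end GMNode

open GMNode

variable {G : SimpleGraph V} {M : Set (Sym2 V)}

theorem gmAdj_flip {x y : GMNode V} (h : gmAdj G M x y) : gmAdj G M y.flip x.flip := by
  rcases x with ⟨a, _ | _⟩ | _ | _ <;> rcases y with ⟨b, _ | _⟩ | _ | _ <;>
    simp_all [gmAdj, GMNode.flip, Lbl.flip, Sym2.eq_swap]

theorem not_gmAdj_t {y : GMNode V} : ¬ gmAdj G M .t y := by
  rcases y with ⟨b, _ | _⟩ | _ | _ <;> simp [gmAdj]

theorem IsDirPath.t_notMem {p : List (GMNode V)} {u : GMNode V} {v : V} {L : Lbl}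
    (hp : IsDirPath (gmAdj G M) p u (.inner v L)) : .t ∉ p := by
  intro ht
  obtain ⟨l, r, rfl⟩ := List.append_of_mem ht
  obtain ⟨hchain, -, hlast⟩ := (isDirPath_append_cons.1 hp).2
  cases r with
  | nil => simp at hlast
  | cons y r => exact not_gmAdj_t (List.isChain_cons_cons.1 hchain).1

theorem IsDirPath.reverse_map_flip {p : List (GMNode V)} {u v : GMNode V}
    (hp : IsDirPath (gmAdj G M) p u v) :
    IsDirPath (gmAdj G M) (p.reverse.map GMNode.flip) v.flip u.flip := by
  obtain ⟨hchain, hhead, hlast⟩ := isDirPath_iff.1 hp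
  refine isDirPath_iff.2 ⟨?_, ?_, ?_⟩
  · rw [List.isChain_map, List.isChain_reverse]
    exact hchain.imp fun _ _ => gmAdj_flip
  · simp [List.head?_reverse, hlast]
  · simp [List.getLast?_reverse, hhead]

def VertexNodup (l : List (GMNode V)) : Prop :=
  l.Pairwise fun x y => ¬ x.SameVertex y

theorem vertexNodup_append {l₁ l₂ : List (GMNode V)} :
    VertexNodup (l₁ ++ l₂) ↔
      VertexNodup l₁ ∧ VertexNodup l₂ ∧ ∀ x ∈ l₁, ∀ y ∈ l₂, ¬ x.SameVertex y :=
  List.pairwise_append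

theorem VertexNodup.sublist {l₁ l₂ : List (GMNode V)} (h : VertexNodup l₂) (hl : l₁.Sublist l₂) :
    VertexNodup l₁ :=
  List.Pairwise.sublist hl h

theorem VertexNodup.reverse_map_flip {l : List (GMNode V)} (h : VertexNodup l) :
    VertexNodup (l.reverse.map GMNode.flip) := by
  unfold VertexNodup at *
  rw [List.pairwise_map, List.pairwise_reverse]
  exact h.imp fun hxy => by rwa [sameVertex_flip_flip, sameVertex_comm]

theorem VertexNodup.stronglySimple {l : List (GMNode V)} (h : VertexNodup l) :
    StronglySimple l := by
  refine ⟨h.imp fun hxy heq => hxy (.inl heq), fun v ⟨hA, hB⟩ => ?_⟩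
  have hsymm : Std.Symm fun x y : GMNode V => ¬ x.SameVertex y :=
    ⟨fun _ _ hxy hyx => hxy (sameVertex_comm.1 hyx)⟩
  exact List.Pairwise.forall h hA hB (by simp) (.inr rfl)

theorem StronglySimple.sublist {l₁ l₂ : List (GMNode V)} (h : StronglySimple l₂)
    (hl : l₁.Sublist l₂) : StronglySimple l₁ :=
  ⟨h.1.sublist hl, fun v ⟨hA, hB⟩ => h.2 v ⟨hl.subset hA, hl.subset hB⟩⟩

theorem StronglySimple.vertexNodup {l : List (GMNode V)} (h : StronglySimple l) (ht : .t ∉ l) :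
    VertexNodup l := by
  refine h.1.imp_of_mem fun {x y} hx hy hne hxy => ?_
  rcases hxy with rfl | rfl
  · exact hne rfl
  · rcases y with ⟨v, _ | _⟩ | _ | _
    · exact h.2 v ⟨hy, hx⟩
    · exact h.2 v ⟨hx, hy⟩
    · exact ht hx
    · exact ht hy

theorem gmLevel_le {W : List (GMNode V)} {x : GMNode V} (hW : IsDirPath (gmAdj G M) W .s x)
    (hss : StronglySimple W) : gmLevel G M x ≤ (W.length - 1 : ℕ) :=
  sInf_le ⟨W, ⟨hW, hss⟩, rfl⟩

theorem exists_of_gmLevel_lt {x : GMNode V} {n : ℕ} (h : gmLevel G M x < n) :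
    ∃ q, IsDirPath (gmAdj G M) q .s x ∧ StronglySimple q ∧ q.length - 1 < n := by
  obtain ⟨_, ⟨q, ⟨hq, hss⟩, rfl⟩, hlt⟩ := sInf_lt_iff.1 h
  exact ⟨q, hq, hss, Nat.cast_lt.1 hlt⟩

theorem gmLevel_le_of_getElem? {p : List (GMNode V)} {v x : GMNode V} {i : ℕ}
    (hp : IsDirPath (gmAdj G M) p .s v) (hss : StronglySimple p) (hi : p[i]? = some x) :
    gmLevel G M x ≤ i := by
  have hlen : (p.take (i + 1)).length - 1 = i := by
    simp [(List.getElem?_eq_some_iff.1 hi).1]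
  simpa only [hlen] using gmLevel_le (hp.take_of_getElem? hi) (hss.sublist (List.take_sublist _ _))

theorem exists_shortcut {q r : List (GMNode V)} {x v : GMNode V}
    (hq : IsDirPath (gmAdj G M) q .s x) (hqn : VertexNodup q)
    (hr : IsDirPath (gmAdj G M) r x v) (hrn : VertexNodup r) :
    ∃ W, VertexNodup W ∧ W.length < q.length + r.length ∧
      (IsDirPath (gmAdj G M) W .s v ∨ IsDirPath (gmAdj G M) W .s x.flip) := by
  have hxq : x ∈ q := List.mem_of_getLast? (isDirPath_iff.1 hq).2.2
  have hxr : x ∈ r := List.mem_of_head? (isDirPath_iff.1 hr).2.1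
  -- Cut `q` at its first node `y` that lies over the same vertex as some node `z` of `r`.
  obtain ⟨q₁, y, q₂, rfl, ⟨z, hzr, hyz⟩, hfirst⟩ :=
    List.exists_first_mem_of_exists (P := fun y => ∃ z ∈ r, y.SameVertex z)
      ⟨x, hxq, x, hxr, .inl rfl⟩
  obtain ⟨r₁, r₂, rfl⟩ := List.append_of_mem hzr
  have hq₁ : VertexNodup q₁ := hqn.sublist (List.sublist_append_left _ _)
  have hcross : ∀ a ∈ q₁, ∀ c ∈ r₁ ++ z :: r₂, ¬ a.SameVertex c :=
    fun a ha c hc h => hfirst a ha ⟨c, hc, h⟩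
  have hqy := (isDirPath_append_cons.1 hq).1
  rcases hyz with rfl | rfl
  · refine ⟨q₁ ++ y :: r₂, ?_, by simp; omega,
      .inl (isDirPath_append_cons.2 ⟨hqy, (isDirPath_append_cons.1 hr).2⟩)⟩
    exact vertexNodup_append.2 ⟨hq₁, hrn.sublist (List.sublist_append_right _ _),
      fun a ha c hc => hcross a ha c (List.mem_append_right _ hc)⟩
  -- `y = z̄`: return along `r` from `z` back to `x` in the mirror image of `G_M`.
  · have hrev : (r₁ ++ [z]).reverse.map GMNode.flip = z.flip :: r₁.reverse.map GMNode.flip := by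
      simp
    have hseg := (isDirPath_append_cons.1 hr).1.reverse_map_flip
    rw [hrev] at hseg
    refine ⟨q₁ ++ z.flip :: r₁.reverse.map GMNode.flip, ?_, by simp; omega,
      .inr (isDirPath_append_cons.2 ⟨hqy, hseg⟩)⟩
    refine vertexNodup_append.2 ⟨hq₁, hrev ▸ (hrn.sublist ?_).reverse_map_flip, ?_⟩
    · exact ((List.nil_sublist _).cons_cons z).append_left _
    · rw [← hrev]
      intro a ha b hb
      obtain ⟨c, hc, rfl⟩ := List.mem_map.1 hb
      rw [sameVertex_flip_right]
      exact hcross a ha c (by simp at hc ⊢; tauto)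

theorem shortest_path_levels_general (G : SimpleGraph V) (M : Set (Sym2 V))
    (p : List (GMNode V)) (vl : V) (Z : Lbl)
    (hp : IsDirPath (gmAdj G M) p GMNode.s (.inner vl Z))
    (hss : StronglySimple p)
    (hshort : gmLevel G M (.inner vl Z) = ((p.length - 1 : ℕ) : ℕ∞))
    (j : ℕ) (vj : V) (X : Lbl) (hj : p[j]? = some (.inner vj X))
    (hflip : ((p.length - 1 : ℕ) : ℕ∞) ≤ gmLevel G M (.inner vj X.flip)) :
    gmLevel G M (.inner vj X) = (j : ℕ∞) ∧
      ∀ i < j, ∀ (vi : V) (Y : Lbl), p[i]? = some (.inner vi Y) →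
        gmLevel G M (.inner vi Y) < gmLevel G M (.inner vj X) := by
  have hle : ∀ (i : ℕ) x, p[i]? = some x → gmLevel G M x ≤ i :=
    fun _ _ hi => gmLevel_le_of_getElem? hp hss hi
  have hlevel : gmLevel G M (.inner vj X) = j := by
    refine le_antisymm (hle j _ hj) (not_lt.1 fun hlt => ?_)
    obtain ⟨q, hq, hqss, hqlen⟩ := exists_of_gmLevel_lt hlt
    obtain ⟨W, hWn, hWlen, hW⟩ := exists_shortcut hq (hqss.vertexNodup hq.t_notMem)
      (hp.drop_of_getElem? hj) ((hss.vertexNodup hp.t_notMem).sublist (List.drop_sublist j p))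
    have hj_lt : j < p.length := (List.getElem?_eq_some_iff.1 hj).1
    have hnot_shorter : ∀ y, ((p.length - 1 : ℕ) : ℕ∞) ≤ gmLevel G M y →
        ¬ IsDirPath (gmAdj G M) W .s y := fun y hy hWy => by
      have := Nat.cast_le.1 (hy.trans (gmLevel_le hWy hWn.stronglySimple))
      rw [List.length_drop] at hWlen
      omega
    rcases hW with hW | hW
    · exact hnot_shorter _ hshort.ge hW
    · exact hnot_shorter _ hflip hW
  exact ⟨hlevel, fun i hi vi Y hiY => hlevel ▸ (hle i _ hiY).trans_lt (Nat.cast_lt.2 hi)⟩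

/-- Lemma 5 (hk1): let `P` be a shortest strongly simple path from `s` to
`[v_l,Z]` (so `level([v_l,Z]) = l`, the length of `P`), and let `[v_j,X]` be
the `j`-th node of `P`.  If `level([v_j,X̄]) ≥ l` (an undefined level counting
as `⊤ ≥ l`), then `level([v_j,X]) = j` and every node `[v_i,Y]` of `P` with
`i < j` satisfies `level([v_i,Y]) < level([v_j,X])`. -/
theorem shortest_path_levels (G : SimpleGraph V) (M : Set (Sym2 V))
    (hM : IsMatchingOn G M)
    (p : List (GMNode V)) (vl : V) (Z : Lbl)
    (hp : IsDirPath (gmAdj G M) p GMNode.s (.inner vl Z))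
    (hss : StronglySimple p)
    (hshort : gmLevel G M (.inner vl Z) = ((p.length - 1 : ℕ) : ℕ∞))
    (j : ℕ) (vj : V) (X : Lbl) (hj : p[j]? = some (.inner vj X))
    (hflip : ((p.length - 1 : ℕ) : ℕ∞) ≤ gmLevel G M (.inner vj X.flip)) :
    gmLevel G M (.inner vj X) = (j : ℕ∞) ∧
      ∀ i < j, ∀ (vi : V) (Y : Lbl), p[i]? = some (.inner vi Y) →
        gmLevel G M (.inner vi Y) < gmLevel G M (.inner vj X) :=
  shortest_path_levels_general G M p vl Z hp hss hshort j vj X hj hflip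
end

section
/- (Sufficiency of the optimality conditions.) Assume the dual feasibility invariant w(i,j) ≤ d(i,j) holds for all (i,j) ∈ E, and let M ⊆ E be a matching satisfying: (1) r(i,j) := d(i,j) − w(i,j) = 0 for all (i,j) ∈ M; (2) π(i) = 0 for every M-free node i ∈ V; and (3) μ(E_l) > 0 implies |E_l ∩ M| = c(E_l) for every E_l ∈ F. Then w(M) = Σ_{i ∈ V} π(i) + Σ_{E_l ∈ F} c(E_l)·μ(E_l), and M is a maximum weight matching: w(M') ≤ w(M) for every matching M' ⊆ E. -/
open Finset

variable {V : Type*} [Fintype V] [DecidableEq V]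

/-- `M` is a matching contained in the edge set `S`: a set of edges of `S`,
no two of which share a node. -/
def IsMatchingIn (S M : Finset (Sym2 V)) : Prop :=
  M ⊆ S ∧ ∀ e ∈ M, ∀ f ∈ M, ∀ v : V, v ∈ e → v ∈ f → e = f

/-- A node is `M`-free if it is incident to no edge of `M`. -/
def MFreeF (M : Finset (Sym2 V)) (v : V) : Prop := ∀ e ∈ M, v ∉ e

/-- The dual weight `d(i,j) = π(i) + π(j) + Σ_{E_l ∈ F, (i,j) ∈ E_l} μ(E_l)`
of an edge. -/
noncomputable def dualWeight (π : V → ℝ) (F : Finset (Finset (Sym2 V)))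
    (μ : Finset (Sym2 V) → ℝ) (e : Sym2 V) : ℝ :=
  Sym2.lift ⟨fun i j => π i + π j, fun _ _ => add_comm _ _⟩ e +
    ∑ S ∈ F.filter (fun S => e ∈ S), μ S

/-- `c(S)`: the maximum cardinality of a matching contained in `S`. -/
noncomputable def matchNum (S : Finset (Sym2 V)) : ℕ :=
  sSup {n : ℕ | ∃ M : Finset (Sym2 V), IsMatchingIn S M ∧ M.card = n}

lemma lift_eq_sum (π : V → ℝ) (e : Sym2 V) (he : ¬e.IsDiag) :
    Sym2.lift ⟨fun i j => π i + π j, fun _ _ => add_comm _ _⟩ e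
      = ∑ v ∈ Finset.univ.filter (· ∈ e), π v := by
  induction e using Sym2.ind with
  | _ i j =>
    have hij : i ≠ j := by simpa using he
    have hs : Finset.univ.filter (· ∈ s(i,j)) = {i, j} := by
      ext v; simp [Sym2.mem_iff]
    rw [hs, Finset.sum_insert (by simp [hij]), Finset.sum_singleton, Sym2.lift_mk]

lemma card_le_matchNum (S M : Finset (Sym2 V)) (h : IsMatchingIn S M) :
    M.card ≤ matchNum S := by
  apply le_csSup
  · exact ⟨S.card, fun n ⟨N, hN, hc⟩ => hc ▸ Finset.card_le_card hN.1⟩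
  · exact ⟨M, h, rfl⟩

lemma inter_matching (S E M : Finset (Sym2 V)) (hM : IsMatchingIn E M) :
    IsMatchingIn S (S ∩ M) := by
  refine ⟨Finset.inter_subset_left, fun e he f hf v hv hv' => ?_⟩
  exact hM.2 e (Finset.mem_of_mem_inter_right he) f (Finset.mem_of_mem_inter_right hf) v hv hv'

lemma dual_sum (E : Finset (Sym2 V)) (hE : ∀ e ∈ E, ¬e.IsDiag)
    (π : V → ℝ) (F : Finset (Finset (Sym2 V))) (μ : Finset (Sym2 V) → ℝ)
    (M : Finset (Sym2 V)) (hM : IsMatchingIn E M) :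
    ∑ e ∈ M, dualWeight π F μ e
      = (∑ v ∈ M.biUnion (fun e => Finset.univ.filter (· ∈ e)), π v)
        + ∑ S ∈ F, ((S ∩ M).card : ℝ) * μ S := by
  unfold dualWeight
  rw [Finset.sum_add_distrib]
  congr 1
  · rw [Finset.sum_biUnion]
    · exact Finset.sum_congr rfl fun e he => lift_eq_sum π e (hE e (hM.1 he))
    · intro e he f hf hef
      simp only [Function.onFun]
      rw [Finset.disjoint_left]
      intro v hv hv'
      simp only [Finset.mem_coe, Finset.mem_filter] at hv hv'
      exact hef (hM.2 e he f hf v hv.2 hv'.2)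
  · rw [Finset.sum_comm' (s := M) (t := fun e => F.filter (fun S => e ∈ S))
      (t' := F) (s' := fun S => M.filter (fun e => e ∈ S)) (f := fun _ S => μ S)
      (by intro e S; simp; tauto)]
    refine Finset.sum_congr rfl fun S hS => ?_
    rw [Finset.sum_const, nsmul_eq_mul]
    congr 2
    congr 1
    ext e; simp [and_comm]

/-- Sufficiency of the optimality conditions: under dual feasibility, if the
matching `M` satisfies (1) zero reduced cost on all its edges, (2) zero node
weight on all `M`-free nodes, and (3) `μ(E_l) > 0` implies
`|E_l ∩ M| = c(E_l)`, then `w(M)` equals the dual bound and `M` is a maximum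
weight matching. -/
theorem optimality_sufficient
    (E : Finset (Sym2 V)) (hE : ∀ e ∈ E, ¬e.IsDiag)
    (w : Sym2 V → ℝ) (hw : ∀ e ∈ E, 0 < w e)
    (π : V → ℝ) (hπ : ∀ i : V, 0 ≤ π i)
    (F : Finset (Finset (Sym2 V))) (hF : ∀ S ∈ F, S ⊆ E)
    (μ : Finset (Sym2 V) → ℝ) (hμ : ∀ S ∈ F, 0 ≤ μ S)
    (hfeas : ∀ e ∈ E, w e ≤ dualWeight π F μ e)
    (M : Finset (Sym2 V)) (hM : IsMatchingIn E M)
    (h1 : ∀ e ∈ M, dualWeight π F μ e - w e = 0)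
    (h2 : ∀ i : V, MFreeF M i → π i = 0)
    (h3 : ∀ S ∈ F, 0 < μ S → (S ∩ M).card = matchNum S) :
    ∑ e ∈ M, w e = ∑ i : V, π i + ∑ S ∈ F, (matchNum S : ℝ) * μ S ∧
      ∀ M' : Finset (Sym2 V), IsMatchingIn E M' →
        ∑ e ∈ M', w e ≤ ∑ e ∈ M, w e := by
  have key : ∑ e ∈ M, w e = ∑ i : V, π i + ∑ S ∈ F, (matchNum S : ℝ) * μ S := by
    have hwd : ∑ e ∈ M, w e = ∑ e ∈ M, dualWeight π F μ e :=
      Finset.sum_congr rfl fun e he => by linarith [h1 e he]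
    rw [hwd, dual_sum E hE π F μ M hM]
    congr 1
    · refine Finset.sum_subset (Finset.subset_univ _) fun v _ hv => ?_
      refine h2 v fun e he hve => hv ?_
      exact Finset.mem_biUnion.2 ⟨e, he, by simp [hve]⟩
    · refine Finset.sum_congr rfl fun S hS => ?_
      rcases (hμ S hS).eq_or_lt with h | h
      · rw [← h, mul_zero, mul_zero]
      · rw [h3 S hS h]
  refine ⟨key, fun M' hM' => ?_⟩
  rw [key]
  calc ∑ e ∈ M', w e ≤ ∑ e ∈ M', dualWeight π F μ e :=
        Finset.sum_le_sum fun e he => hfeas e (hM'.1 he)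
    _ = (∑ v ∈ M'.biUnion (fun e => Finset.univ.filter (· ∈ e)), π v)
        + ∑ S ∈ F, ((S ∩ M').card : ℝ) * μ S := dual_sum E hE π F μ M' hM'
    _ ≤ ∑ i : V, π i + ∑ S ∈ F, (matchNum S : ℝ) * μ S := by
        have ha : (∑ v ∈ M'.biUnion (fun e => Finset.univ.filter (· ∈ e)), π v)
            ≤ ∑ i : V, π i :=
          Finset.sum_le_sum_of_subset_of_nonneg (Finset.subset_univ _)
            fun v _ _ => hπ v
        have hb : ∑ S ∈ F, ((S ∩ M').card : ℝ) * μ S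
            ≤ ∑ S ∈ F, (matchNum S : ℝ) * μ S :=
          Finset.sum_le_sum fun S hS => mul_le_mul_of_nonneg_right
            (by exact_mod_cast card_le_matchNum S _ (inter_matching S E M' hM'))
            (hμ S hS)
        linarith
end
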